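/- arXiv:2001.10192 — 2 statements merged into one kernel-verified Lean document; each statement's English description precedes it below -/
import Mathlib

section
/- For every integer r ≥ 1, the number of pairs (k, (l_1, …, l_k)), where k ≥ 1 is an integer and l_1, …, l_k are nonnegative integers satisfying k + 2(l_1 + ⋯ + l_k) ≤ r, equals Σ_{s=0}^{r−1} Σ_{l=s}^{(r−1)/2 + ⌊s/2⌋} C(l, s) when r is odd, and equals Σ_{s=0}^{r−1} Σ_{l=s}^{r/2 − 1 + ⌊(s+1)/2⌋} C(l, s) when r is even, where C(l, s) denotes the binomial coefficient l!/(s!(l−s)!) and ⌊x⌋ denotes the integer part of x. -/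
lemma card_tuple_sum_eq (k m : ℕ) :
    (Finset.Nat.antidiagonalTuple k m).card = (k + m - 1).choose m := by
  rw [← Fintype.card_coe]
  rw [Fintype.card_congr ((Equiv.subtypeEquivRight (fun f =>
      Finset.Nat.mem_antidiagonalTuple)).trans
      (Sym.equivNatSumOfFintype (Fin k) m).symm)]
  simpa using Sym.card_sym_eq_choose (α := Fin k) m

lemma card_tuple_sum_le (k N : ℕ) (hk : 1 ≤ k) :
    ((Finset.range (N + 1)).biUnion (fun m => Finset.Nat.antidiagonalTuple k m)).card
      = (N + k).choose k := by
  rw [Finset.card_biUnion]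
  · obtain ⟨s, rfl⟩ := Nat.exists_eq_add_of_le hk
    calc ∑ m ∈ Finset.range (N + 1), (Finset.Nat.antidiagonalTuple (1 + s) m).card
        = ∑ m ∈ Finset.range (N + 1), (s + m).choose s := by
          refine Finset.sum_congr rfl fun m _ => ?_
          rw [card_tuple_sum_eq]
          rw [show 1 + s + m - 1 = s + m by omega, Nat.choose_symm_add]
      _ = ∑ l ∈ Finset.Icc s (s + N), l.choose s := by
          rw [← Finset.Ico_add_one_right_eq_Icc, Finset.sum_Ico_eq_sum_range,
            show s + N + 1 - s = N + 1 by omega]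
      _ = (N + (1 + s)).choose (1 + s) := by
          rw [Nat.sum_Icc_choose]
          congr 1 <;> omega
  · intro a _ b _ hab
    simp only [Finset.disjoint_left, Finset.Nat.mem_antidiagonalTuple]
    rintro f rfl h
    exact hab h

/-- The number of pairs `(k, (l₁, …, l_k))` with `k ≥ 1` an integer and
`l₁, …, l_k` nonnegative integers satisfying `k + 2(l₁ + ⋯ + l_k) ≤ r`
equals `Σ_{s=0}^{r−1} Σ_{l=s}^{(r−1)/2+⌊s/2⌋} C(l,s)` for odd `r` and
`Σ_{s=0}^{r−1} Σ_{l=s}^{r/2−1+⌊(s+1)/2⌋} C(l,s)` for even `r`. -/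
theorem rank_D_eq (r : ℕ) (hr : 1 ≤ r) :
    Nat.card {p : Σ k : ℕ, Fin k → ℕ // 1 ≤ p.1 ∧ p.1 + 2 * ∑ i, p.2 i ≤ r} =
      if Odd r then
        ∑ s ∈ Finset.range r, ∑ l ∈ Finset.Icc s ((r - 1) / 2 + s / 2),
          l.choose s
      else
        ∑ s ∈ Finset.range r, ∑ l ∈ Finset.Icc s (r / 2 - 1 + (s + 1) / 2),
          l.choose s := by
  classical
  set S : Finset (Σ k : ℕ, Fin k → ℕ) :=
    (Finset.Icc 1 r).sigma (fun k =>
      (Finset.range ((r - k) / 2 + 1)).biUnion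
        (fun m => Finset.Nat.antidiagonalTuple k m)) with hS
  have hmem : ∀ p : Σ k : ℕ, Fin k → ℕ,
      p ∈ S ↔ (1 ≤ p.1 ∧ p.1 + 2 * ∑ i, p.2 i ≤ r) := by
    rintro ⟨k, f⟩
    simp only [hS, Finset.mem_sigma, Finset.mem_Icc, Finset.mem_biUnion,
      Finset.mem_range, Finset.Nat.mem_antidiagonalTuple]
    constructor
    · rintro ⟨⟨h1, h2⟩, m, hm, rfl⟩
      exact ⟨h1, by omega⟩
    · rintro ⟨h1, h2⟩
      exact ⟨⟨h1, by omega⟩, ∑ i, f i, by omega, rfl⟩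
  have hcard : Nat.card {p : Σ k : ℕ, Fin k → ℕ //
      1 ≤ p.1 ∧ p.1 + 2 * ∑ i, p.2 i ≤ r} = S.card := by
    rw [← Nat.card_eq_finsetCard]
    exact Nat.card_congr (Equiv.subtypeEquivRight (fun p => (hmem p).symm))
  rw [hcard, hS, Finset.card_sigma]
  have hsum : ∑ k ∈ Finset.Icc 1 r,
      ((Finset.range ((r - k) / 2 + 1)).biUnion
        (fun m => Finset.Nat.antidiagonalTuple k m)).card
      = ∑ s ∈ Finset.range r, ((r - (1 + s)) / 2 + (1 + s)).choose (1 + s) := by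
    rw [← Finset.Ico_add_one_right_eq_Icc, Finset.sum_Ico_eq_sum_range,
      show r + 1 - 1 = r by omega]
    refine Finset.sum_congr rfl fun s hs => ?_
    rw [card_tuple_sum_le _ _ (by omega)]
  rw [hsum]
  by_cases hodd : Odd r
  · rw [if_pos hodd]
    obtain ⟨t, rfl⟩ := hodd
    refine Finset.sum_congr rfl fun s hs => ?_
    rw [Nat.sum_Icc_choose]
    simp only [Finset.mem_range] at hs
    congr 1 <;> omega
  · rw [if_neg hodd]
    rw [Nat.not_odd_iff_even] at hodd
    obtain ⟨t, rfl⟩ := hodd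
    refine Finset.sum_congr rfl fun s hs => ?_
    rw [Nat.sum_Icc_choose]
    simp only [Finset.mem_range] at hs
    congr 1 <;> omega
end

section
/- Let P_n denote the n-th Legendre polynomial, P_n(y) = (1/(2^n n!)) dⁿ/dyⁿ (y² − 1)ⁿ. Then for all integers i ≥ 1 and j ≥ 0: ∫_{−1}^{1} P_j(y) (∫_{−1}^{y} P_i(x) dx) dy equals 2/((2i+1)(2j+1)) if j = i+1, equals −2/((2i+1)(2j+1)) if j = i−1, and equals 0 otherwise. Moreover, for i = 0: ∫_{−1}^{1} P_j(y) (∫_{−1}^{y} P_0(x) dx) dy equals 2 if j = 0, equals 2/3 if j = 1, and equals 0 for j ≥ 2. -/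
open Polynomial intervalIntegral MeasureTheory

namespace LegAux

noncomputable def W (n : ℕ) : ℝ[X] := ((X : ℝ[X]) ^ 2 - 1) ^ n

noncomputable def Leg (n : ℕ) : ℝ[X] :=
  C (1 / (2 ^ n * (Nat.factorial n) : ℝ)) * derivative^[n] (W n)

lemma eval_iteratedDeriv (p : ℝ[X]) (n : ℕ) :
    iteratedDeriv n (fun z : ℝ => p.eval z) = fun y => (derivative^[n] p).eval y := by
  induction n with
  | zero => simp
  | succ n ih =>
    rw [iteratedDeriv_succ, ih]
    funext y
    rw [Function.iterate_succ_apply']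
    exact Polynomial.deriv (p := derivative^[n] p) (x := y)

lemma ftc (p : ℝ[X]) (a b : ℝ) :
    ∫ x in a..b, (derivative p).eval x = p.eval b - p.eval a := by
  refine intervalIntegral.integral_eq_sub_of_hasDerivAt (fun x _ => p.hasDerivAt x) ?_
  exact (p.derivative.continuous).intervalIntegrable a b

lemma integrable_eval (p : ℝ[X]) (a b : ℝ) :
    IntervalIntegrable (fun x => p.eval x) volume a b :=
  (p.continuous).intervalIntegrable a b

noncomputable def antider (p : ℝ[X]) : ℝ[X] :=
  ∑ k ∈ Finset.range (p.natDegree + 1), C (p.coeff k / (k + 1)) * X ^ (k + 1)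

lemma derivative_antider (p : ℝ[X]) : derivative (antider p) = p := by
  rw [antider, map_sum]
  conv_rhs => rw [p.as_sum_range' (p.natDegree + 1) (Nat.lt_succ_self _)]
  refine Finset.sum_congr rfl fun k _ => ?_
  rw [derivative_C_mul, derivative_X_pow]
  rw [← mul_assoc, ← C_mul]
  push_cast
  rw [div_mul_cancel₀ _ (by positivity : ((k : ℝ) + 1) ≠ 0)]
  rw [C_mul_X_pow_eq_monomial]

lemma natDegree_antider (p : ℝ[X]) : (antider p).natDegree ≤ p.natDegree + 1 := by
  refine Polynomial.natDegree_sum_le_of_forall_le _ _ fun k hk => ?_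
  refine (Polynomial.natDegree_C_mul_le _ _).trans ?_
  simp only [natDegree_X_pow]
  exact Nat.succ_le_succ (Nat.lt_succ_iff.mp (Finset.mem_range.mp hk))

lemma coeff_antider_top (p : ℝ[X]) (k : ℕ) (hk : k ≤ p.natDegree) :
    (antider p).coeff (k + 1) = p.coeff k / (k + 1) := by
  rw [antider, finset_sum_coeff]
  rw [Finset.sum_eq_single k]
  · simp
  · intro b hb hbk
    have h1 : b + 1 ≠ k + 1 := fun h => hbk (Nat.succ_injective h)
    simp only [coeff_C_mul, coeff_X_pow]
    rw [if_neg (Ne.symm h1), mul_zero]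
  · intro h
    exact absurd (Finset.mem_range.mpr (Nat.lt_succ_of_le hk)) h

lemma intble (p q : ℝ[X]) (a b : ℝ) :
    IntervalIntegrable (fun x => p.eval x * q.eval x) volume a b :=
  (p.continuous.mul q.continuous).intervalIntegrable a b

lemma W_eval (n k : ℕ) (hk : k < n) (a : ℝ) (ha : a ^ 2 = 1) :
    (derivative^[k] (W n)).eval a = 0 := by
  have hdvd : ((X : ℝ[X]) ^ 2 - 1) ^ (n - k) ∣ derivative^[k] (W n) :=
    Polynomial.pow_sub_dvd_iterate_derivative_pow _ n k
  obtain ⟨q, hq⟩ := hdvd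
  rw [hq, eval_mul, eval_pow, eval_sub, eval_pow, eval_X, eval_one, ha, sub_self,
    zero_pow (by omega), zero_mul]

lemma parts (u v : ℝ[X]) :
    ∫ x in (-1:ℝ)..1, u.eval x * (derivative v).eval x =
      ((u * v).eval 1 - (u * v).eval (-1)) -
        ∫ x in (-1:ℝ)..1, (derivative u).eval x * v.eval x := by
  have h := ftc (u * v) (-1) 1
  rw [derivative_mul] at h
  have hsplit : ∫ x in (-1:ℝ)..1, (derivative (u*v)).eval x =
      (∫ x in (-1:ℝ)..1, (derivative u).eval x * v.eval x) +
        ∫ x in (-1:ℝ)..1, u.eval x * (derivative v).eval x := by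
    rw [derivative_mul, ← intervalIntegral.integral_add (intble _ _ _ _) (intble _ _ _ _)]
    simp [eval_add, eval_mul]
  rw [derivative_mul] at hsplit
  rw [hsplit] at h
  linarith

/-- iterated integration by parts against the Rodrigues weight -/
lemma parts_iter (p : ℝ[X]) (n k : ℕ) (hk : k ≤ n) :
    ∫ x in (-1:ℝ)..1, p.eval x * (derivative^[n] (W n)).eval x =
      (-1 : ℝ) ^ k *
        ∫ x in (-1:ℝ)..1, (derivative^[k] p).eval x * (derivative^[n-k] (W n)).eval x := by
  induction k with
  | zero => simp
  | succ k ih =>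
    rw [ih (by omega)]
    have hstep : derivative^[n - k] (W n) = derivative (derivative^[n - (k+1)] (W n)) := by
      have : n - k = (n - (k+1)) + 1 := by omega
      rw [this, Function.iterate_succ_apply']
    rw [hstep, parts]
    have h1 : (derivative^[k] p * derivative^[n - (k+1)] (W n)).eval 1 = 0 := by
      rw [eval_mul, W_eval n _ (by omega) 1 (by norm_num), mul_zero]
    have h2 : (derivative^[k] p * derivative^[n - (k+1)] (W n)).eval (-1) = 0 := by
      rw [eval_mul, W_eval n _ (by omega) (-1) (by norm_num), mul_zero]
    rw [h1, h2, Function.iterate_succ_apply']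
    ring

lemma monic_W (n : ℕ) : (W n).Monic := by
  have h : ((X : ℝ[X]) ^ 2 - 1) = X ^ 2 - C 1 := by simp
  exact (h ▸ (monic_X_pow_sub_C (1:ℝ) two_ne_zero)).pow n

lemma natDegree_W (n : ℕ) : (W n).natDegree = 2 * n := by
  have h : ((X : ℝ[X]) ^ 2 - 1) = X ^ 2 - C 1 := by simp
  rw [W, h, Monic.natDegree_pow (h ▸ (monic_X_pow_sub_C (1:ℝ) two_ne_zero)),
    natDegree_X_pow_sub_C]
  ring

lemma coeff_W_top (n : ℕ) : (W n).coeff (2 * n) = 1 := by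
  have := (monic_W n).coeff_natDegree
  rwa [natDegree_W] at this

lemma natDegree_DW (n : ℕ) : (derivative^[n] (W n)).natDegree ≤ n := by
  have h := Polynomial.natDegree_iterate_derivative (W n) n
  rw [natDegree_W] at h
  omega

lemma coeff_DW (n : ℕ) :
    (derivative^[n] (W n)).coeff n = ((2 * n).descFactorial n : ℝ) := by
  rw [Polynomial.coeff_iterate_derivative]
  have h : n + n = 2 * n := by ring
  rw [h, coeff_W_top, nsmul_eq_mul, mul_one]


lemma descF_pos (n : ℕ) : 0 < (2 * n).descFactorial n :=
  Nat.pos_of_ne_zero (by simp only [ne_eq, Nat.descFactorial_eq_zero_iff_lt]; omega)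

lemma c_pos (n : ℕ) : (0:ℝ) < 1 / (2 ^ n * (Nat.factorial n) : ℝ) := by positivity

lemma natDegree_Leg (n : ℕ) : (Leg n).natDegree = n := by
  have hle : (Leg n).natDegree ≤ n :=
    (Polynomial.natDegree_C_mul_le _ _).trans (natDegree_DW n)
  have hco : (Leg n).coeff n = (1 / (2 ^ n * (Nat.factorial n) : ℝ)) *
      ((2 * n).descFactorial n : ℝ) := by
    rw [Leg, coeff_C_mul, coeff_DW]
  have hne : (Leg n).coeff n ≠ 0 := by
    rw [hco]
    have := descF_pos n
    positivity
  exact le_antisymm hle (Polynomial.le_natDegree_of_ne_zero hne)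

lemma coeff_Leg (n : ℕ) : (Leg n).coeff n = (1 / (2 ^ n * (Nat.factorial n) : ℝ)) *
    ((2 * n).descFactorial n : ℝ) := by
  rw [Leg, coeff_C_mul, coeff_DW]

lemma iterate_derivative_of_natDegree_le (q : ℝ[X]) (n : ℕ) (h : q.natDegree ≤ n) :
    derivative^[n] q = C ((n.factorial : ℝ) * q.coeff n) := by
  have hdeg : (derivative^[n] q).natDegree ≤ 0 := by
    have := Polynomial.natDegree_iterate_derivative q n
    omega
  rw [Polynomial.eq_C_of_natDegree_le_zero hdeg, Polynomial.coeff_iterate_derivative,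
    zero_add, Nat.descFactorial_self, nsmul_eq_mul]

lemma orth (p : ℝ[X]) (n : ℕ) (h : p.natDegree < n) :
    ∫ x in (-1:ℝ)..1, p.eval x * (Leg n).eval x = 0 := by
  have h1 : ∀ x : ℝ, p.eval x * (Leg n).eval x =
      (1 / (2 ^ n * (Nat.factorial n) : ℝ)) *
        (p.eval x * (derivative^[n] (W n)).eval x) := by
    intro x; rw [Leg, eval_mul, eval_C]; ring
  simp_rw [h1]
  rw [intervalIntegral.integral_const_mul, parts_iter p n n le_rfl,
    Polynomial.iterate_derivative_eq_zero h]
  simp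

noncomputable def In (n : ℕ) : ℝ := ∫ x in (-1:ℝ)..1, (W n).eval x

lemma In_zero : In 0 = 2 := by
  norm_num [In, W]

lemma eval_deriv_XW (n : ℕ) (x : ℝ) :
    (derivative ((X : ℝ[X]) * W (n+1))).eval x =
      (2*(n:ℝ)+3) * (W (n+1)).eval x + (2*(n:ℝ)+2) * (W n).eval x := by
  rw [W, W, derivative_mul, derivative_X, derivative_pow]
  simp only [derivative_sub, derivative_one, derivative_X_pow, eval_add, eval_mul, eval_pow,
    eval_sub, eval_one, eval_X, eval_natCast, eval_mul, Nat.cast_ofNat, Nat.add_sub_cancel,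
    eval_C, Nat.cast_add, Nat.cast_one, one_mul, sub_zero]
  push_cast
  ring

lemma In_rec (n : ℕ) : (2*(n:ℝ)+3) * In (n+1) = -(2*(n:ℝ)+2) * In n := by
  have hb := ftc ((X : ℝ[X]) * W (n+1)) (-1) 1
  have h1 : (((X : ℝ[X]) * W (n+1))).eval 1 = 0 := by
    rw [eval_mul]
    have := W_eval (n+1) 0 (by omega) 1 (by norm_num)
    simp only [Function.iterate_zero_apply] at this
    rw [this, mul_zero]
  have h2 : (((X : ℝ[X]) * W (n+1))).eval (-1) = 0 := by
    rw [eval_mul]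
    have := W_eval (n+1) 0 (by omega) (-1) (by norm_num)
    simp only [Function.iterate_zero_apply] at this
    rw [this, mul_zero]
  rw [h1, h2, sub_zero] at hb
  have hsplit : ∫ x in (-1:ℝ)..1, (derivative ((X : ℝ[X]) * W (n+1))).eval x =
      (2*(n:ℝ)+3) * In (n+1) + (2*(n:ℝ)+2) * In n := by
    have hcong : ∀ x : ℝ, (derivative ((X : ℝ[X]) * W (n+1))).eval x =
        (2*(n:ℝ)+3) * (W (n+1)).eval x + (2*(n:ℝ)+2) * (W n).eval x := eval_deriv_XW n
    simp_rw [hcong]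
    rw [intervalIntegral.integral_add
      (show IntervalIntegrable (fun x => (2*(n:ℝ)+3) * (W (n+1)).eval x) volume (-1) 1 by
        exact (continuous_const.mul (W (n+1)).continuous).intervalIntegrable _ _)
      (show IntervalIntegrable (fun x => (2*(n:ℝ)+2) * (W n).eval x) volume (-1) 1 by
        exact (continuous_const.mul (W n).continuous).intervalIntegrable _ _),
      intervalIntegral.integral_const_mul, intervalIntegral.integral_const_mul]
    rfl
  rw [hsplit] at hb
  linarith

lemma In_eq (n : ℕ) : In n =
    (-1:ℝ)^n * 2^(2*n+1) * ((n.factorial : ℝ))^2 / ((2*n+1).factorial : ℝ) := by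
  induction n with
  | zero => simp [In_zero]
  | succ n ih =>
    have hrec := In_rec n
    have h3 : (2*(n:ℝ)+3) ≠ 0 := by positivity
    have : In (n+1) = -(2*(n:ℝ)+2) * In n / (2*(n:ℝ)+3) := by
      field_simp at hrec ⊢
      linarith
    rw [this, ih]
    have hf1 : ((2*(n+1)+1).factorial : ℝ) =
        (2*(n:ℝ)+3) * ((2*(n:ℝ)+2) * ((2*n+1).factorial : ℝ)) := by
      have e1 : 2*(n+1)+1 = (2*n+1) + 1 + 1 := by omega
      rw [e1, Nat.factorial_succ, Nat.factorial_succ]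
      push_cast
      ring
    have hf2 : (((n+1).factorial : ℝ)) = ((n:ℝ)+1) * (n.factorial : ℝ) := by
      rw [Nat.factorial_succ]; push_cast; ring
    rw [hf1, hf2]
    have hfacpos : (0:ℝ) < ((2*n+1).factorial : ℝ) := by positivity
    have hnfac : (0:ℝ) < ((n.factorial : ℝ)) := by positivity
    field_simp
    ring

lemma descF_fact (n : ℕ) : ((2*n).descFactorial n : ℝ) * (n.factorial : ℝ) =
    ((2*n).factorial : ℝ) := by
  have h : (2*n).descFactorial n * n.factorial = (2*n).factorial := by
    rw [Nat.descFactorial_eq_factorial_mul_choose]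
    have := Nat.choose_mul_factorial_mul_factorial (show n ≤ 2*n by omega)
    have h2 : 2*n - n = n := by omega
    rw [h2] at this
    calc n.factorial * (2*n).choose n * n.factorial
        = (2*n).choose n * n.factorial * n.factorial := by ring
      _ = (2*n).factorial := this
  exact_mod_cast congrArg (Nat.cast (R := ℝ)) h

lemma norm_Leg (n : ℕ) :
    ∫ x in (-1:ℝ)..1, (Leg n).eval x * (Leg n).eval x = 2 / (2*(n:ℝ)+1) := by
  have h1 : ∀ x : ℝ, (Leg n).eval x * (Leg n).eval x =
      (1 / (2 ^ n * (Nat.factorial n) : ℝ)) *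
        ((Leg n).eval x * (derivative^[n] (W n)).eval x) := by
    intro x
    conv_lhs => rw [Leg]
    rw [eval_mul, eval_C]
    rw [Leg, eval_mul, eval_C]
    ring
  simp_rw [h1]
  rw [intervalIntegral.integral_const_mul, parts_iter (Leg n) n n le_rfl, Nat.sub_self]
  simp only [Function.iterate_zero_apply]
  rw [iterate_derivative_of_natDegree_le (Leg n) n (natDegree_Leg n).le, coeff_Leg]
  have h2 : ∀ x : ℝ, (C ((n.factorial : ℝ) *
      ((1 / (2 ^ n * (Nat.factorial n) : ℝ)) * ((2 * n).descFactorial n : ℝ)))).eval x *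
      (W n).eval x = ((n.factorial : ℝ) *
      ((1 / (2 ^ n * (Nat.factorial n) : ℝ)) * ((2 * n).descFactorial n : ℝ))) *
      (W n).eval x := by intro x; rw [eval_C]
  simp_rw [h2]
  rw [intervalIntegral.integral_const_mul]
  show (1 / (2 ^ n * (Nat.factorial n) : ℝ)) * ((-1:ℝ)^n * (((n.factorial : ℝ) *
      ((1 / (2 ^ n * (Nat.factorial n) : ℝ)) * ((2 * n).descFactorial n : ℝ))) * In n)) = _
  rw [In_eq]
  have hd := descF_fact n
  have hf : ((2*n+1).factorial : ℝ) = (2*(n:ℝ)+1) * ((2*n).factorial : ℝ) := by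
    rw [Nat.factorial_succ]; push_cast; ring
  have hnfac : (0:ℝ) < ((n.factorial : ℝ)) := by positivity
  have h2n : (0:ℝ) < ((2*n).factorial : ℝ) := by positivity
  have h2n1 : (0:ℝ) < 2*(n:ℝ)+1 := by positivity
  have hsq : (-1:ℝ)^n * (-1:ℝ)^n = 1 := by
    rw [← pow_add]
    exact (neg_one_pow_eq_one_iff_even (by norm_num)).mpr ⟨n, by ring⟩
  rw [hf]
  field_simp
  linear_combination (2 * 2^(n*2) * (n.factorial:ℝ) * (((2*n).descFactorial n : ℕ) : ℝ)) * hsq + (2 * 2^(n*2)) * hd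


noncomputable def A (i : ℕ) : ℝ[X] := antider (Leg i) - C ((antider (Leg i)).eval (-1))

lemma derivative_A (i : ℕ) : derivative (A i) = Leg i := by
  rw [A, derivative_sub, derivative_C, sub_zero, derivative_antider]

lemma eval_A_neg_one (i : ℕ) : (A i).eval (-1) = 0 := by
  simp [A]

lemma inner_eq (i : ℕ) (y : ℝ) :
    (∫ x in (-1:ℝ)..y, (Leg i).eval x) = (A i).eval y := by
  rw [← derivative_A i, ftc, eval_A_neg_one, sub_zero]

lemma natDegree_A_le (i : ℕ) : (A i).natDegree ≤ i + 1 := by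
  refine (Polynomial.natDegree_sub_le _ _).trans ?_
  rw [natDegree_C]
  simp only [max_eq_left (Nat.zero_le _)]
  exact (natDegree_antider _).trans (by rw [natDegree_Leg])

lemma eval_A_one (i : ℕ) (hi : 1 ≤ i) : (A i).eval 1 = 0 := by
  rw [← inner_eq]
  have h := orth 1 i (by simpa using (Nat.pos_of_ne_zero (by omega) : 0 < i))
  simpa using h

lemma coeff_A_top (i : ℕ) : (A i).coeff (i + 1) = (Leg i).coeff i / (i + 1) := by
  rw [A, coeff_sub, coeff_C, if_neg (Nat.succ_ne_zero i), sub_zero]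
  exact coeff_antider_top (Leg i) i (le_of_eq (natDegree_Leg i).symm)

noncomputable def J (i j : ℕ) : ℝ := ∫ y in (-1:ℝ)..1, (Leg j).eval y * (A i).eval y

lemma Jhigh (i j : ℕ) (h : i + 1 < j) : J i j = 0 := by
  rw [J]
  have hcomm : ∀ y : ℝ, (Leg j).eval y * (A i).eval y = (A i).eval y * (Leg j).eval y :=
    fun y => mul_comm _ _
  simp_rw [hcomm]
  exact orth (A i) j (lt_of_le_of_lt (natDegree_A_le i) h)

lemma Janti (i j : ℕ) (hi : 1 ≤ i) : J i j = - J j i := by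
  have hp := parts (A j) (A i)
  rw [derivative_A, derivative_A] at hp
  have h1 : (A j * A i).eval 1 = 0 := by rw [eval_mul, eval_A_one i hi, mul_zero]
  have h2 : (A j * A i).eval (-1) = 0 := by rw [eval_mul, eval_A_neg_one, zero_mul]
  rw [h1, h2] at hp
  have hcomm : ∀ y : ℝ, (A j).eval y * (Leg i).eval y = (Leg i).eval y * (A j).eval y :=
    fun y => mul_comm _ _
  simp_rw [hcomm] at hp
  rw [J, J]
  linarith

lemma cast_fact_arith (j : ℕ) :
    (A j).coeff (j + 1) = (1 / (2 * (j:ℝ) + 1)) * (Leg (j+1)).coeff (j+1) := by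
  rw [coeff_A_top, coeff_Leg, coeff_Leg]
  have hd1 := descF_fact j
  have hd2 := descF_fact (j+1)
  have e1 : 2 * (j + 1) = (2*j + 1) + 1 := by omega
  have hf1 : ((2*(j+1)).factorial : ℝ) = (2*(j:ℝ)+2) * ((2*(j:ℝ)+1) * ((2*j).factorial : ℝ)) := by
    rw [e1, Nat.factorial_succ, Nat.factorial_succ]
    push_cast
    ring
  have hf2 : (((j+1).factorial : ℝ)) = ((j:ℝ)+1) * ((j.factorial : ℝ)) := by
    rw [Nat.factorial_succ]; push_cast; ring
  have hjfac : (0:ℝ) < ((j.factorial : ℝ)) := by positivity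
  have h2jfac : (0:ℝ) < (((2*j).factorial : ℝ)) := by positivity
  have hj1 : (0:ℝ) < (j:ℝ) + 1 := by positivity
  have h2j1 : (0:ℝ) < 2*(j:ℝ) + 1 := by positivity
  have hpow : (0:ℝ) < (2:ℝ)^j := by positivity
  -- express descFactorials via factorials
  have hD1 : (((2*j).descFactorial j : ℕ) : ℝ) = ((2*j).factorial : ℝ) / ((j.factorial : ℝ)) := by
    field_simp [← hd1]
    exact hd1
  have hD2 : (((2*(j+1)).descFactorial (j+1) : ℕ) : ℝ) =
      ((2*(j+1)).factorial : ℝ) / (((j+1).factorial : ℝ)) := by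
    field_simp [← hd2]
    exact hd2
  rw [hD1, hD2, hf1, hf2]
  push_cast
  field_simp
  ring

lemma Jsucc (j : ℕ) : J j (j+1) = 2 / ((2*(j:ℝ)+1) * (2*(j:ℝ)+3)) := by
  set r : ℝ := 1 / (2 * (j:ℝ) + 1) with hr
  set R : ℝ[X] := A j - C r * Leg (j+1) with hR
  have hAR : A j = C r * Leg (j+1) + R := by rw [hR]; ring
  have hdegR : R.natDegree ≤ j := by
    rw [Polynomial.natDegree_le_iff_coeff_eq_zero]
    intro m hm
    rw [hR, coeff_sub, coeff_C_mul]
    rcases Nat.lt_or_ge (j+1) m with hm2 | hm2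
    · rw [Polynomial.coeff_eq_zero_of_natDegree_lt (lt_of_le_of_lt (natDegree_A_le j) hm2),
        Polynomial.coeff_eq_zero_of_natDegree_lt (by rw [natDegree_Leg]; exact hm2),
        mul_zero, sub_zero]
    · have hme : m = j + 1 := by omega
      rw [hme, cast_fact_arith j, ← hr, sub_self]
  rw [J]
  have hsplit : ∀ y : ℝ, (Leg (j+1)).eval y * (A j).eval y =
      r * ((Leg (j+1)).eval y * (Leg (j+1)).eval y) + R.eval y * (Leg (j+1)).eval y := by
    intro y
    rw [hAR, eval_add, eval_mul, eval_C]
    ring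
  simp_rw [hsplit]
  rw [intervalIntegral.integral_add
      (show IntervalIntegrable (fun y => r * ((Leg (j+1)).eval y * (Leg (j+1)).eval y)) volume (-1) 1 by
        exact (continuous_const.mul ((Leg (j+1)).continuous.mul (Leg (j+1)).continuous)).intervalIntegrable _ _)
      (show IntervalIntegrable (fun y => R.eval y * (Leg (j+1)).eval y) volume (-1) 1 by
        exact (R.continuous.mul (Leg (j+1)).continuous).intervalIntegrable _ _),
    intervalIntegral.integral_const_mul, norm_Leg, orth R (j+1) (by omega), add_zero]
  rw [hr]
  push_cast
  field_simp
  ring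

lemma J_eq_zero_diag (i : ℕ) (hi : 1 ≤ i) : J i i = 0 := by
  have := Janti i i hi
  linarith

lemma Leg_zero : Leg 0 = 1 := by
  simp [Leg, W]

lemma A_zero_eval (y : ℝ) : (A 0).eval y = y + 1 := by
  have h := inner_eq 0 y
  rw [Leg_zero] at h
  simp only [eval_one] at h
  rw [← h]
  simp

lemma J00 : J 0 0 = 2 := by
  rw [J, Leg_zero]
  have h : ∀ y : ℝ, (1:ℝ[X]).eval y * (A 0).eval y = y + 1 := by
    intro y; rw [eval_one, one_mul, A_zero_eval]
  simp_rw [h]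
  rw [intervalIntegral.integral_add (intervalIntegral.intervalIntegrable_id)
    (intervalIntegrable_const)]
  simp
  norm_num

end LegAux

open LegAux in
/-- For the Legendre polynomials `P_n(y) = (1/(2^n n!)) dⁿ/dyⁿ (y²−1)ⁿ` and all
integers `i ≥ 1`, `j ≥ 0`, the double integral
`∫_{−1}^{1} P_j(y) (∫_{−1}^{y} P_i(x) dx) dy` equals `2/((2i+1)(2j+1))` if
`j = i+1`, `−2/((2i+1)(2j+1))` if `j = i−1`, and `0` otherwise; moreover, for
`i = 0` it equals `2` if `j = 0`, `2/3` if `j = 1`, and `0` for `j ≥ 2`. -/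
theorem legendre_double_integral
    (P : ℕ → ℝ → ℝ)
    (hP : ∀ (n : ℕ) (y : ℝ), P n y =
      (1 / (2 ^ n * (Nat.factorial n) : ℝ)) *
        iteratedDeriv n (fun z : ℝ => (z ^ 2 - 1) ^ n) y) :
    (∀ i j : ℕ, 1 ≤ i →
      (∫ y in (-1 : ℝ)..1, P j y * ∫ x in (-1 : ℝ)..y, P i x) =
        if j = i + 1 then 2 / ((2 * (i : ℝ) + 1) * (2 * (j : ℝ) + 1))
        else if i = j + 1 then -2 / ((2 * (i : ℝ) + 1) * (2 * (j : ℝ) + 1))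
        else 0) ∧
    (∀ j : ℕ,
      (∫ y in (-1 : ℝ)..1, P j y * ∫ x in (-1 : ℝ)..y, P 0 x) =
        if j = 0 then (2 : ℝ) else if j = 1 then 2 / 3 else 0) := by
  have hPeq : ∀ (n : ℕ) (y : ℝ), P n y = (Leg n).eval y := by
    intro n y
    rw [hP]
    have hfun : (fun z : ℝ => (z ^ 2 - 1) ^ n) = fun z : ℝ => (W n).eval z := by
      funext z; simp [W]
    rw [hfun, eval_iteratedDeriv (W n) n, Leg, Polynomial.eval_mul, Polynomial.eval_C]
  have hinner : ∀ (i : ℕ) (y : ℝ), (∫ x in (-1:ℝ)..y, P i x) = (A i).eval y := by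
    intro i y
    have h1 : ∀ x : ℝ, P i x = (Leg i).eval x := hPeq i
    simp_rw [h1]
    exact inner_eq i y
  have houter : ∀ i j : ℕ,
      (∫ y in (-1 : ℝ)..1, P j y * ∫ x in (-1 : ℝ)..y, P i x) = J i j := by
    intro i j
    rw [J]
    refine intervalIntegral.integral_congr fun y _ => ?_
    rw [hPeq, hinner]
  constructor
  · intro i j hi
    rw [houter]
    by_cases hj1 : j = i + 1
    · subst hj1
      rw [if_pos rfl, Jsucc i]
      push_cast
      ring
    · rw [if_neg hj1]
      by_cases hij : i = j + 1
      · subst hij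
        rw [if_pos rfl, Janti (j+1) j (by omega), Jsucc j]
        push_cast
        field_simp
        ring
      · rw [if_neg hij]
        rcases Nat.lt_trichotomy j i with h | h | h
        · have : j + 1 < i := by omega
          rw [Janti i j hi, Jhigh j i this, neg_zero]
        · subst h
          exact J_eq_zero_diag j hi
        · have : i + 1 < j := by omega
          exact Jhigh i j this
  · intro j
    rw [houter]
    by_cases hj0 : j = 0
    · subst hj0
      rw [if_pos rfl]
      exact J00
    · rw [if_neg hj0]
      by_cases hj1 : j = 1
      · subst hj1
        rw [if_pos rfl]
        have := Jsucc 0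
        norm_num at this
        convert this using 2
      · rw [if_neg hj1]
        exact Jhigh 0 j (by omega)
end
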